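/- arXiv:2204.10861 — 2 statements merged into one kernel-verified Lean document; each statement's English description precedes it below -/
import Mathlib

section
/- Let N be a G-graded near-ring and P a graded weakly prime ideal of N. If the annihilator ({0} : P) = {x ∈ N : xP = {0}} is contained in P, then P is a graded prime ideal of N. -/
open Pointwise

/-- A (right) near-ring: an additive group (not necessarily abelian) with an
associative multiplication that is right distributive over addition. -/
class NearRing (N : Type*) extends AddGroup N, Semigroup N where
  right_distrib : ∀ a b c : N, (a + b) * c = a * c + b * c

/-- A (two-sided) ideal of a near-ring. -/
structure NearRingIdeal (N : Type*) [NearRing N] where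
  carrier : AddSubgroup N
  normal : carrier.Normal
  mul_mem_right : ∀ i n : N, i ∈ carrier → i * n ∈ carrier
  quasi_left : ∀ m n i : N, i ∈ carrier → m * (n + i) - m * n ∈ carrier

instance (N : Type*) [NearRing N] : SetLike (NearRingIdeal N) N where
  coe I := I.carrier
  coe_injective := by
    rintro ⟨a, _, _, _⟩ ⟨b, _, _, _⟩ h
    congr
    exact SetLike.coe_injective h

/-- A `G`-grading on a near-ring `N`: a family of additive normal subgroups
whose internal direct sum is `N`, compatible with multiplication. -/
structure NearRingGrading (G : Type*) [Monoid G] (N : Type*) [NearRing N] where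
  component : G → AddSubgroup N
  normal : ∀ σ : G, (component σ).Normal
  mul_mem : ∀ σ τ : G, ∀ x ∈ component σ, ∀ y ∈ component τ, x * y ∈ component (σ * τ)
  span_top : (⨆ σ : G, component σ) = ⊤
  independent : ∀ σ : G, component σ ⊓ (⨆ τ ∈ ({σ}ᶜ : Set G), component τ) = ⊥

variable {G : Type*} [Monoid G] {N : Type*} [NearRing N]

/-- An ideal is graded if it is generated by its homogeneous elements. -/
def NearRingGrading.IsGradedIdeal (gr : NearRingGrading G N) (I : NearRingIdeal N) : Prop :=
  I.carrier = AddSubgroup.closure ((I : Set N) ∩ ⋃ σ : G, (gr.component σ : Set N))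

/-- The product `IJ` of two ideals, as the set of products of their elements. -/
def idealProd (I J : NearRingIdeal N) : Set N := (I : Set N) * (J : Set N)

/-- A graded prime ideal of a graded near-ring. -/
def NearRingGrading.IsGradedPrime (gr : NearRingGrading G N) (P : NearRingIdeal N) : Prop :=
  gr.IsGradedIdeal P ∧ ∀ I J : NearRingIdeal N, gr.IsGradedIdeal I → gr.IsGradedIdeal J →
    idealProd I J ⊆ (P : Set N) → (I : Set N) ⊆ (P : Set N) ∨ (J : Set N) ⊆ (P : Set N)

/-- A graded weakly prime ideal of a graded near-ring. -/
def NearRingGrading.IsGradedWeaklyPrime (gr : NearRingGrading G N) (P : NearRingIdeal N) : Prop :=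
  gr.IsGradedIdeal P ∧ ∀ I J : NearRingIdeal N, gr.IsGradedIdeal I → gr.IsGradedIdeal J →
    idealProd I J ≠ {0} → idealProd I J ⊆ (P : Set N) →
      (I : Set N) ⊆ (P : Set N) ∨ (J : Set N) ⊆ (P : Set N)

/-- A graded almost prime ideal of a graded near-ring. -/
def NearRingGrading.IsGradedAlmostPrime (gr : NearRingGrading G N) (P : NearRingIdeal N) : Prop :=
  gr.IsGradedIdeal P ∧ ∀ I J : NearRingIdeal N, gr.IsGradedIdeal I → gr.IsGradedIdeal J →
    idealProd I J ⊆ (P : Set N) → ¬ idealProd I J ⊆ idealProd P P →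
      (I : Set N) ⊆ (P : Set N) ∨ (J : Set N) ⊆ (P : Set N)

/-! If `IJ ⊆ P`, then also `I(J + P) ⊆ P`, because `i(j + p) - ij ∈ P` is exactly the quasi-ideal
condition. Either `I(J + P) = {0}`, so that `I` annihilates `P` and lies in `({0} : P) ⊆ P`, or
weak primality applies to the graded ideals `I` and `J + P`. -/

namespace NearRingIdeal

instance : Max (NearRingIdeal N) where
  max I J :=
    { carrier := I.carrier ⊔ J.carrier
      normal := AddSubgroup.sup_normal _ _ (hH := I.normal) (hK := J.normal)
      mul_mem_right := by
        intro x n hx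
        obtain ⟨i, hi, j, hj, rfl⟩ :=
          AddSubgroup.mem_sup_of_normal_right (ht := J.normal) |>.1 hx
        rw [NearRing.right_distrib]
        exact AddSubgroup.add_mem_sup (I.mul_mem_right i n hi) (J.mul_mem_right j n hj)
      quasi_left := by
        intro m n x hx
        obtain ⟨i, hi, j, hj, rfl⟩ :=
          AddSubgroup.mem_sup_of_normal_right (ht := J.normal) |>.1 hx
        rw [← sub_add_sub_cancel (m * (n + (i + j))) (m * (n + i)), ← add_assoc]
        exact add_mem (AddSubgroup.mem_sup_right (J.quasi_left m (n + i) j hj))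
          (AddSubgroup.mem_sup_left (I.quasi_left m n i hi)) }

theorem mem_sup {I J : NearRingIdeal N} {x : N} :
    x ∈ I ⊔ J ↔ ∃ i ∈ I, ∃ j ∈ J, i + j = x :=
  AddSubgroup.mem_sup_of_normal_right (ht := J.normal)

theorem subset_sup_left {I J : NearRingIdeal N} : (I : Set N) ⊆ (I ⊔ J : NearRingIdeal N) :=
  fun _ => AddSubgroup.mem_sup_left

theorem subset_sup_right {I J : NearRingIdeal N} : (J : Set N) ⊆ (I ⊔ J : NearRingIdeal N) :=
  fun _ => AddSubgroup.mem_sup_right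

end NearRingIdeal

theorem NearRingGrading.IsGradedIdeal.sup {gr : NearRingGrading G N} {I J : NearRingIdeal N}
    (hI : gr.IsGradedIdeal I) (hJ : gr.IsGradedIdeal J) : gr.IsGradedIdeal (I ⊔ J) := by
  refine le_antisymm (sup_le ?_ ?_) ((AddSubgroup.closure_le _).2 Set.inter_subset_left)
  · rw [hI]
    exact AddSubgroup.closure_mono (Set.inter_subset_inter_left _ NearRingIdeal.subset_sup_left)
  · rw [hJ]
    exact AddSubgroup.closure_mono (Set.inter_subset_inter_left _ NearRingIdeal.subset_sup_right)

theorem idealProd_eq_zero_iff {I J : NearRingIdeal N} :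
    idealProd I J = {0} ↔ ∀ i ∈ I, ∀ j ∈ J, i * j = 0 := by
  constructor
  · intro h i hi j hj
    have : i * j ∈ idealProd I J := Set.mul_mem_mul hi hj
    rwa [h] at this
  · intro h
    refine Set.eq_singleton_iff_unique_mem.2 ⟨⟨0, zero_mem I.carrier, 0, zero_mem J.carrier, ?_⟩, ?_⟩
    · exact h 0 (zero_mem I.carrier) 0 (zero_mem J.carrier)
    · rintro _ ⟨i, hi, j, hj, rfl⟩
      exact h i hi j hj

theorem idealProd_sup_right_subset {I J P : NearRingIdeal N} (h : idealProd I J ⊆ P) :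
    idealProd I (J ⊔ P) ⊆ P := by
  rintro _ ⟨i, hi, _, hjp, rfl⟩
  obtain ⟨j, hj, p, hp, rfl⟩ := NearRingIdeal.mem_sup.1 hjp
  have := P.carrier.add_mem (P.quasi_left i j p hp) (h (Set.mul_mem_mul hi hj))
  rwa [sub_add_cancel] at this

/-- A graded weakly prime ideal whose annihilator `({0} : P)` is contained
in `P` is graded prime. -/
theorem weaklyPrime_ann_subset_imp_prime (gr : NearRingGrading G N) (P : NearRingIdeal N)
    (hwp : gr.IsGradedWeaklyPrime P)
    (hann : {x : N | ∀ p ∈ P, x * p = 0} ⊆ (P : Set N)) :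
    gr.IsGradedPrime P := by
  obtain ⟨hPg, hP⟩ := hwp
  refine ⟨hPg, fun I J hI hJ hIJ => ?_⟩
  by_cases hIJP : idealProd I (J ⊔ P) = {0}
  · exact .inl fun i hi => hann fun p hp =>
      idealProd_eq_zero_iff.1 hIJP i hi p (NearRingIdeal.subset_sup_right hp)
  · exact (hP I (J ⊔ P) hI (hJ.sup hPg) hIJP (idealProd_sup_right_subset hIJ)).imp_right
      fun hJP => NearRingIdeal.subset_sup_left.trans hJP
end

section
/- Let N be a G-graded near-ring and P a graded weakly prime ideal of N with P² = {0}. If I is a graded ideal of N with I² ⊆ P, then I² = {0}. -/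
open Pointwise

variable {G : Type*} [Monoid G] {N : Type*} [NearRing N]

theorem NearRing.zero_mul (c : N) : (0 : N) * c = 0 := by
  have h := NearRing.right_distrib (0 : N) 0 c
  rwa [add_zero, left_eq_add] at h

theorem zero_mem_idealProd (I J : NearRingIdeal N) : (0 : N) ∈ idealProd I J :=
  ⟨0, I.carrier.zero_mem, 0, J.carrier.zero_mem, NearRing.zero_mul 0⟩

theorem idealProd_mono {I I' J J' : NearRingIdeal N} (hI : (I : Set N) ⊆ I')
    (hJ : (J : Set N) ⊆ J') : idealProd I J ⊆ idealProd I' J' :=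
  Set.mul_subset_mul hI hJ

theorem idealProd_eq_zero_of_subset {I J : NearRingIdeal N} (h : idealProd I J ⊆ {0}) :
    idealProd I J = {0} :=
  h.antisymm (Set.singleton_subset_iff.mpr (zero_mem_idealProd I J))

/-- If `P` is graded weakly prime with `P² = {0}` and `I` is a graded ideal
with `I² ⊆ P`, then `I² = {0}`. -/
theorem sq_eq_zero_of_sq_subset_weaklyPrime (gr : NearRingGrading G N) (P : NearRingIdeal N)
    (hwp : gr.IsGradedWeaklyPrime P) (hPsq : idealProd P P = {0})
    (I : NearRingIdeal N) (hI : gr.IsGradedIdeal I)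
    (hsub : idealProd I I ⊆ (P : Set N)) :
    idealProd I I = {0} := by
  by_contra hne
  have hIP : (I : Set N) ⊆ P := (hwp.2 I I hI hI hne hsub).elim id id
  exact hne (idealProd_eq_zero_of_subset (hPsq ▸ idealProd_mono hIP hIP))
end
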